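/- arXiv:1102.0660 — 5 statements merged into one kernel-verified Lean document; each statement's English description precedes it below -/
import Mathlib

section
/- If a is odd and q ≥ 2, then the greatest common divisor of (q^a + 1)/(q + 1) and q + 1 divides gcd(a, q + 1). -/
theorem gcd_div_plus_dvd (q a : ℕ) (hq : 2 ≤ q) (ha : Odd a) (ha1 : 1 ≤ a) :
    Nat.gcd ((q ^ a + 1) / (q + 1)) (q + 1) ∣ Nat.gcd a (q + 1) := by
  set t : ℤ := ∑ i ∈ Finset.range a, (-(q:ℤ)) ^ i with ht
  have h1 : ((q:ℤ) + 1) * t = (q:ℤ) ^ a + 1 := by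
    have := geom_sum_mul (-(q:ℤ)) a
    have hpow : (-(q:ℤ)) ^ a = -((q:ℤ) ^ a) := ha.neg_pow _
    nlinarith [this, hpow]
  have hdvdnat : (q + 1) ∣ (q ^ a + 1) := by
    have : ((q:ℤ) + 1) ∣ ((q:ℤ) ^ a + 1) := ⟨t, h1.symm⟩
    exact_mod_cast this
  have h2 : ((q + 1 : ℕ) : ℤ) * (((q ^ a + 1) / (q + 1) : ℕ) : ℤ) = (q:ℤ) ^ a + 1 := by
    rw [← Nat.cast_mul, Nat.mul_div_cancel' hdvdnat]; push_cast; ring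
  have hS : (((q ^ a + 1) / (q + 1) : ℕ) : ℤ) = t := by
    apply mul_left_cancel₀ (by positivity : ((q:ℤ)+1) ≠ 0)
    rw [h1]
    rw [← h2]; push_cast; ring
  have h3 : ((q:ℤ) + 1) ∣ t - a := by
    have : t - a = ∑ i ∈ Finset.range a, ((-(q:ℤ)) ^ i - 1 ^ i) := by
      rw [Finset.sum_sub_distrib]; simp [ht]
    rw [this]
    apply Finset.dvd_sum
    intro i _
    have : (-(q:ℤ) - 1) ∣ (-(q:ℤ)) ^ i - 1 ^ i := sub_dvd_pow_sub_pow _ _ _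
    have hneg : ((q:ℤ) + 1) = -(-(q:ℤ) - 1) := by ring
    rw [hneg]
    exact (neg_dvd).mpr this
  set d := Nat.gcd ((q ^ a + 1) / (q + 1)) (q + 1) with hd
  have hda : (d : ℤ) ∣ a := by
    have h4 : (d:ℤ) ∣ t := hS ▸ Int.natCast_dvd_natCast.mpr (Nat.gcd_dvd_left _ _)
    have h5 : (d:ℤ) ∣ (q:ℤ) + 1 := by exact_mod_cast Int.natCast_dvd_natCast.mpr (Nat.gcd_dvd_right _ _)
    have := dvd_sub h4 (h5.trans h3)
    simpa using this
  exact Nat.dvd_gcd (Int.natCast_dvd_natCast.mp hda) (Nat.gcd_dvd_right _ _)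
end

section
/- If a is odd, gcd(a, b) = 1, and q ≥ 2, then the greatest common divisor of (q^a + 1)/(q + 1) and q^b + 1 divides gcd(a, q + 1). -/
/-- Key algebraic lemma: `x^2` divides `(x-1)^(2k+1) + 1 - (2k+1)*x`. -/
lemma aux_sq_dvd (x : ℤ) (k : ℕ) :
    x ^ 2 ∣ (x - 1) ^ (2 * k + 1) + 1 - (2 * (k : ℤ) + 1) * x := by
  induction k with
  | zero =>
    have : (x - 1) ^ (2 * 0 + 1) + 1 - (2 * ((0 : ℕ) : ℤ) + 1) * x = 0 := by
      push_cast; ring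
    rw [this]
    exact dvd_zero _
  | succ k ih =>
    obtain ⟨d, hd⟩ := ih
    have hx : x ∣ (x - 1) ^ (2 * k + 1) + 1 := by
      have h := sub_dvd_pow_sub_pow (x - 1) (-1) (2 * k + 1)
      have h1 : (-1 : ℤ) ^ (2 * k + 1) = -1 := Odd.neg_one_pow ⟨k, by ring⟩
      rw [h1] at h
      have h2 : x - 1 - (-1) = x := by ring
      rw [h2] at h
      simpa [sub_neg_eq_add] using h
    obtain ⟨c, hc⟩ := hx
    refine ⟨d + (x - 1) ^ (2 * k + 1) - 2 * c, ?_⟩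
    rw [show 2 * (k + 1) + 1 = (2 * k + 1) + 2 from by ring, pow_add]
    push_cast
    linear_combination hd - 2 * x * hc

theorem gcd_div_plus_pow_plus (q a b : ℕ) (hq : 2 ≤ q) (ha : Odd a) (ha1 : 1 ≤ a)
    (hb : 1 ≤ b) (hab : Nat.gcd a b = 1) :
    Nat.gcd ((q ^ a + 1) / (q + 1)) (q ^ b + 1) ∣ Nat.gcd a (q + 1) := by
  set N := (q ^ a + 1) / (q + 1) with hNdef
  set d := Nat.gcd N (q ^ b + 1) with hddef
  -- q + 1 divides q^a + 1
  have hdvd : q + 1 ∣ q ^ a + 1 := by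
    have h := sub_dvd_pow_sub_pow (q : ℤ) (-1) a
    rw [Odd.neg_one_pow ha] at h
    have h2 : (q : ℤ) - (-1) = (q : ℤ) + 1 := by ring
    rw [h2, sub_neg_eq_add] at h
    exact_mod_cast h
  have hmul : (q + 1) * N = q ^ a + 1 := Nat.mul_div_cancel' hdvd
  have hdN : d ∣ N := Nat.gcd_dvd_left _ _
  have hdb : d ∣ q ^ b + 1 := Nat.gcd_dvd_right _ _
  have hda' : d ∣ q ^ a + 1 := hdN.trans ⟨q + 1, by rw [← hmul]; ring⟩
  -- In ZMod d : q^a = -1 and q^b = -1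
  have h1 : ((q : ZMod d)) ^ a = -1 := by
    have h0 : ((q ^ a + 1 : ℕ) : ZMod d) = 0 :=
      (ZMod.natCast_eq_zero_iff _ _).mpr hda'
    push_cast at h0
    exact eq_neg_of_add_eq_zero_left h0
  have h2 : ((q : ZMod d)) ^ b = -1 := by
    have h0 : ((q ^ b + 1 : ℕ) : ZMod d) = 0 :=
      (ZMod.natCast_eq_zero_iff _ _).mpr hdb
    push_cast at h0
    exact eq_neg_of_add_eq_zero_left h0
  -- q^2 = 1 in ZMod d
  have hq2 : ((q : ZMod d)) ^ 2 = 1 := by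
    have ho1 : orderOf (q : ZMod d) ∣ a * 2 := by
      apply orderOf_dvd_of_pow_eq_one
      rw [pow_mul, h1]; ring
    have ho2 : orderOf (q : ZMod d) ∣ b * 2 := by
      apply orderOf_dvd_of_pow_eq_one
      rw [pow_mul, h2]; ring
    have ho : orderOf (q : ZMod d) ∣ 2 := by
      have := Nat.dvd_gcd ho1 ho2
      rwa [Nat.gcd_mul_right, hab, one_mul] at this
    exact orderOf_dvd_iff_pow_eq_one.mp ho
  -- d ∣ q + 1
  have hdq1 : d ∣ q + 1 := by
    rcases Nat.even_or_odd b with hbe | hbo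
    · -- b even : d ∣ 2
      obtain ⟨m, hm⟩ := hbe
      have hqb1 : ((q : ZMod d)) ^ b = 1 := by
        rw [hm, show m + m = 2 * m from by ring, pow_mul, hq2, one_pow]
      have h11 : (-1 : ZMod d) = 1 := by rw [← h2, hqb1]
      have h20 : ((2 : ℕ) : ZMod d) = 0 := by
        push_cast
        linear_combination -h11
      have hd2 : d ∣ 2 := (ZMod.natCast_eq_zero_iff _ _).mp h20
      rcases Nat.even_or_odd q with hqe | hqo
      · -- q even: q^b + 1 is odd, so d = 1
        have h2q : 2 ∣ q ^ b := hqe.two_dvd.trans (dvd_pow_self q (by omega))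
        have hnot : ¬ (2 ∣ q ^ b + 1) := by omega
        rcases (Nat.dvd_prime Nat.prime_two).mp hd2 with h | h
        · rw [h]; exact Nat.one_dvd _
        · rw [h] at hdb; exact absurd hdb hnot
      · -- q odd: 2 ∣ q + 1
        obtain ⟨t, ht⟩ := hqo
        exact hd2.trans ⟨t + 1, by omega⟩
    · -- b odd : q = -1 in ZMod d
      obtain ⟨m, hm⟩ := hbo
      have hqneg : (q : ZMod d) = -1 := by
        rw [hm, pow_add, pow_mul, hq2, one_pow, pow_one] at h2
        simpa using h2
      have h0 : ((q + 1 : ℕ) : ZMod d) = 0 := by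
        push_cast
        rw [hqneg]; ring
      exact (ZMod.natCast_eq_zero_iff _ _).mp h0
  -- d ∣ a
  have hda : d ∣ a := by
    obtain ⟨k, hk⟩ := ha
    have key : ((q : ℤ) + 1) ^ 2 ∣ (q : ℤ) ^ a + 1 - (a : ℤ) * ((q : ℤ) + 1) := by
      have h := aux_sq_dvd ((q : ℤ) + 1) k
      have heq : ((q : ℤ) + 1 - 1) = (q : ℤ) := by ring
      rw [heq] at h
      have ha' : (a : ℤ) = 2 * (k : ℤ) + 1 := by exact_mod_cast hk
      rw [hk]
      rw [show (((2 * k + 1 : ℕ)) : ℤ) = 2 * (k : ℤ) + 1 from by push_cast; ring]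
      exact h
    have hmulZ : ((q : ℤ) + 1) * (N : ℤ) = (q : ℤ) ^ a + 1 := by exact_mod_cast hmul
    have key2 : ((q : ℤ) + 1) ∣ (N : ℤ) - (a : ℤ) := by
      have hne : ((q : ℤ) + 1) ≠ 0 := by positivity
      have : ((q : ℤ) + 1) * (((q : ℤ) + 1) ) ∣ ((q : ℤ) + 1) * ((N : ℤ) - (a : ℤ)) := by
        rw [show ((q : ℤ) + 1) * ((N : ℤ) - (a : ℤ)) =
          (q : ℤ) ^ a + 1 - (a : ℤ) * ((q : ℤ) + 1) from by linear_combination hmulZ]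
        rw [← sq]
        exact key
      exact (mul_dvd_mul_iff_left hne).mp this
    have hdZ1 : (d : ℤ) ∣ (N : ℤ) - (a : ℤ) :=
      (Int.natCast_dvd_natCast.mpr hdq1).trans key2
    have hdZ2 : (d : ℤ) ∣ (N : ℤ) := Int.natCast_dvd_natCast.mpr hdN
    have : (d : ℤ) ∣ (a : ℤ) := by
      have := dvd_sub hdZ2 hdZ1
      simpa using this
    exact_mod_cast this
  exact Nat.dvd_gcd hda hdq1
end

section
/- If a is odd, gcd(a, b) = 1, and q ≥ 2, then the greatest common divisor of (q^a + 1)/(q + 1) and q^b - 1 divides gcd(a, q + 1). -/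
/-!
Let `d` be the gcd and work in `ZMod d`, where `q ^ a = -1` and `q ^ b = 1`. Then `q ^ 2` is killed
by the coprime exponents `a` and `b`, so `q ^ 2 = 1`, and as `a` is odd, `q = q ^ a = -1`; that is,
`d ∣ q + 1`. Finally `(q ^ a + 1) / (q + 1) = ∑_{i < a} (-q) ^ i ≡ a`, so `d ∣ a` as well.
-/

open Finset

theorem eq_neg_one_of_pow_eq_neg_one_of_pow_eq_one {M : Type*} [Monoid M] [HasDistribNeg M]
    {u : M} {m n : ℕ} (hm : Odd m) (hmn : m.Coprime n) (hum : u ^ m = -1) (hun : u ^ n = 1) :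
    u = -1 := by
  have hsq : u ^ 2 = 1 := (pow_eq_one_iff_of_coprime hmn).1
    ⟨by rw [← pow_mul, mul_comm, pow_mul, hum, neg_one_sq],
     by rw [← pow_mul, mul_comm, pow_mul, hun, one_pow]⟩
  obtain ⟨k, rfl⟩ := hm
  rwa [pow_succ, pow_mul, hsq, one_pow, one_mul] at hum

theorem Odd.cast_pow_add_one_div_add_one {R : Type*} [CommRing R] {n : ℕ} (hn : Odd n) (q : ℕ) :
    (((q ^ n + 1) / (q + 1) : ℕ) : R) = ∑ i ∈ range n, (-(q : R)) ^ i := by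
  have hgeom : ((q : ℤ) ^ n + 1) = (∑ i ∈ range n, (-(q : ℤ)) ^ i) * (q + 1) := by
    linear_combination geom_sum_mul (-(q : ℤ)) n + hn.neg_pow (q : ℤ)
  have hℤ : (((q ^ n + 1) / (q + 1) : ℕ) : ℤ) = ∑ i ∈ range n, (-(q : ℤ)) ^ i := by
    push_cast
    exact Int.ediv_eq_of_eq_mul_left (by positivity) hgeom
  rw [← Int.cast_natCast, hℤ]
  simp

theorem gcd_div_plus_pow_sub_general (q a b : ℕ) (hq : 2 ≤ q) (ha : Odd a)
    (hab : Nat.gcd a b = 1) :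
    Nat.gcd ((q ^ a + 1) / (q + 1)) (q ^ b - 1) ∣ Nat.gcd a (q + 1) := by
  set d := Nat.gcd ((q ^ a + 1) / (q + 1)) (q ^ b - 1)
  have hN : (((q ^ a + 1) / (q + 1) : ℕ) : ZMod d) = 0 :=
    (ZMod.natCast_eq_zero_iff _ _).2 (Nat.gcd_dvd_left _ _)
  have hqa : (q : ZMod d) ^ a = -1 := by
    have hdiv := Nat.div_mul_cancel (by simpa using ha.nat_add_dvd_pow_add_pow q 1)
    have hcast := congrArg (Nat.cast : ℕ → ZMod d) hdiv
    push_cast [hN, zero_mul] at hcast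
    exact eq_neg_of_add_eq_zero_left hcast.symm
  have hqb : (q : ZMod d) ^ b = 1 := by
    have hmod : 1 ≡ q ^ b [MOD d] :=
      (Nat.modEq_iff_dvd' (Nat.one_le_pow _ _ (by omega))).2 (Nat.gcd_dvd_right _ _)
    exact_mod_cast ((ZMod.natCast_eq_natCast_iff _ _ _).2 hmod).symm
  have hq1 : (q : ZMod d) = -1 := eq_neg_one_of_pow_eq_neg_one_of_pow_eq_one ha hab hqa hqb
  refine Nat.dvd_gcd ((ZMod.natCast_eq_zero_iff _ _).1 ?_) ((ZMod.natCast_eq_zero_iff _ _).1 ?_)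
  · simpa [ha.cast_pow_add_one_div_add_one, hq1] using hN
  · push_cast
    rw [hq1, neg_add_cancel]

theorem gcd_div_plus_pow_sub (q a b : ℕ) (hq : 2 ≤ q) (ha : Odd a) (ha1 : 1 ≤ a)
    (hb : 1 ≤ b) (hab : Nat.gcd a b = 1) :
    Nat.gcd ((q ^ a + 1) / (q + 1)) (q ^ b - 1) ∣ Nat.gcd a (q + 1) :=
  gcd_div_plus_pow_sub_general q a b hq ha hab
end

section
/- If t is a prime with n/2 < t < n (so in particular gcd(n, t) = 1 and t odd when n ≥ 5, t ≥ 3, t ≠ n), and q ≥ 2, then gcd(q^t + 1, q^(n-t) + (-1)^n) = q + 1. -/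
/-!
With `m = n - t` and `t` odd, both numbers are `±((-q)^k - 1)` for `k = t, m`, and
`gcd(x^a - 1, x^b - 1) = |x^gcd(a, b) - 1|` (in `ℤ/d`, `x^a = x^b = 1` forces `x^gcd(a, b) = 1`).
Since `gcd(t, m) = gcd(t, n) = 1`, the gcd is `|-q - 1| = q + 1`.
-/

namespace Int

lemma natCast_dvd_pow_gcd_sub_one_iff {d : ℕ} {x : ℤ} {a b : ℕ} :
    (d : ℤ) ∣ x ^ a.gcd b - 1 ↔ (d : ℤ) ∣ x ^ a - 1 ∧ (d : ℤ) ∣ x ^ b - 1 := by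
  simp only [← ZMod.intCast_zmod_eq_zero_iff_dvd, Int.cast_sub, Int.cast_pow, Int.cast_one,
    sub_eq_zero, pow_gcd_eq_one]

lemma gcd_pow_sub_one_pow_sub_one (x : ℤ) (a b : ℕ) :
    Int.gcd (x ^ a - 1) (x ^ b - 1) = (x ^ a.gcd b - 1).natAbs := by
  apply Nat.dvd_antisymm
  · exact Int.ofNat_dvd_left.mp
      (natCast_dvd_pow_gcd_sub_one_iff.mpr ⟨Int.gcd_dvd_left _ _, Int.gcd_dvd_right _ _⟩)
  · obtain ⟨ha, hb⟩ := natCast_dvd_pow_gcd_sub_one_iff.mp (Int.natAbs_dvd.mpr dvd_rfl)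
    exact Int.natCast_dvd_natCast.mp (Int.dvd_coe_gcd ha hb)

lemma natAbs_pow_sub_neg_one_pow (x : ℤ) (k : ℕ) :
    (x ^ k - (-1) ^ k).natAbs = ((-x) ^ k - 1).natAbs := by
  have : (-x) ^ k - 1 = (-1) ^ k * (x ^ k - (-1) ^ k) := by
    rw [neg_pow, mul_sub, ← pow_add, ← two_mul, pow_mul]; norm_num
  rw [this, Int.natAbs_mul, Int.natAbs_pow]; simp

end Int

theorem gcd_bertrand_general (n t q : ℕ) (htodd : Odd t)
    (h2 : t < n) (hnt : Nat.gcd n t = 1) :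
    Int.gcd ((q : ℤ) ^ t + 1) ((q : ℤ) ^ (n - t) + (-1) ^ n) = q + 1 := by
  obtain ⟨m, rfl⟩ := Nat.exists_eq_add_of_le h2.le
  have hcop : t.gcd m = 1 := by
    rwa [Nat.gcd_comm, Nat.gcd_self_add_right] at hnt
  have hA : (q : ℤ) ^ t + 1 = q ^ t - (-1) ^ t := by rw [htodd.neg_one_pow]; ring
  have hB : (q : ℤ) ^ (t + m - t) + (-1) ^ (t + m) = q ^ m - (-1) ^ m := by
    rw [Nat.add_sub_cancel_left, pow_add, htodd.neg_one_pow]; ring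
  rw [hA, hB, Int.gcd_eq_natAbs, Int.natAbs_pow_sub_neg_one_pow, Int.natAbs_pow_sub_neg_one_pow,
    ← Int.gcd_eq_natAbs, Int.gcd_pow_sub_one_pow_sub_one, hcop, pow_one]
  omega

theorem gcd_bertrand (n t q : ℕ) (hn : 5 ≤ n) (ht : t.Prime) (htodd : Odd t)
    (h1 : n < 2 * t) (h2 : t < n) (hnt : Nat.gcd n t = 1) (hq : 2 ≤ q) :
    Int.gcd ((q : ℤ) ^ t + 1) ((q : ℤ) ^ (n - t) + (-1) ^ n) = q + 1 :=
  gcd_bertrand_general n t q htodd h2 hnt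
end

section
/- Let q be an odd prime power and let x be a generator of the cyclic group of order (q+1)/gcd(2,q-1) acting on a 2-dimensional vector space V over F_q as multiplication by u^(2(q-1)) under an identification V ≅ F_{q^2}, where u generates F_{q^2}^*. Then x acts irreducibly on V if and only if q ≠ 3. -/
/-!
If `x ∈ L` leaves a line `K ∙ v` invariant then `x * v = c • v`, so `x` lies in `K`;
conversely, multiplication by an element of `K` leaves every subspace invariant. Hence, for
`[L : K] = 2`, irreducibility of `x` means `x ∉ K`. For `x = u ^ (2 (q - 1))` with `u` of order
`q² - 1`, `x ∈ K` forces `x ^ (q - 1) = 1`, i.e. `(q + 1)(q - 1) ∣ 2 (q - 1)²`, so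
`q + 1 ∣ 2 (q - 1)`, hence `q + 1 ∣ 4` and `q = 3`; and for `q = 3`, `x² = u ^ 8 = 1` gives
`x = ±1 ∈ K`.
-/

open Module

theorem Nat.eq_three_of_sq_sub_one_dvd {q : ℕ} (hq : 2 ≤ q)
    (h : q ^ 2 - 1 ∣ 2 * (q - 1) * (q - 1)) : q = 3 := by
  have hdvd : q + 1 ∣ 2 * (q - 1) := by
    rw [show q ^ 2 - 1 = (q + 1) * (q - 1) by simpa using Nat.sq_sub_sq q 1] at h
    exact Nat.dvd_of_mul_dvd_mul_right (by omega) h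
  have hfour : q + 1 ∣ 4 := by
    have := Nat.dvd_sub (dvd_mul_left (q + 1) 2) hdvd
    rwa [show 2 * (q + 1) - 2 * (q - 1) = 4 by omega] at this
  have hle : q ≤ 3 := by have := Nat.le_of_dvd (by norm_num) hfour; omega
  interval_cases q <;> simp_all

theorem forall_mul_invariant_eq_bot_or_eq_top_iff {K L : Type*} [Field K] [Field L]
    [Algebra K L] (hL : finrank K L = 2) (y : L) :
    (∀ W : Submodule K L, (∀ v ∈ W, y * v ∈ W) → W = ⊥ ∨ W = ⊤) ↔
      y ∉ Set.range (algebraMap K L) := by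
  have : Module.Finite K L := finite_of_finrank_pos (by omega)
  constructor
  · rintro hirr ⟨c, rfl⟩
    have hline : K ∙ (1 : L) ≠ ⊤ := by
      intro htop
      have := finrank_span_singleton (K := K) (one_ne_zero (α := L))
      rw [htop, finrank_top] at this
      omega
    refine (hirr (K ∙ 1) fun v hv ↦ ?_).elim (by simp) hline
    simpa [← Algebra.smul_def] using Submodule.smul_mem _ c hv
  · intro hy W hW
    by_contra! hW'
    obtain ⟨v, hvW, hv0⟩ := Submodule.exists_mem_ne_zero_of_ne_bot hW'.1
    have hspan : K ∙ v = W := by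
      refine Submodule.eq_of_le_of_finrank_le (by simpa using hvW) ?_
      have := Submodule.finrank_lt hW'.2
      rw [finrank_span_singleton hv0]
      omega
    obtain ⟨c, hc⟩ := Submodule.mem_span_singleton.mp (hspan ▸ hW v hvW)
    rw [Algebra.smul_def] at hc
    exact hy ⟨c, mul_right_cancel₀ hv0 hc⟩

theorem unit_pow_two_mul_sub_one_mem_range_algebraMap_iff {K L : Type*} [Field K] [Field L]
    [Algebra K L] [Fintype K] {q : ℕ} (hK : Fintype.card K = q) {u : Lˣ}
    (hu : orderOf u = q ^ 2 - 1) :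
    (u : L) ^ (2 * (q - 1)) ∈ Set.range (algebraMap K L) ↔ q = 3 := by
  constructor
  · rintro ⟨c, hc⟩
    have hc0 : c ≠ 0 := by
      rintro rfl
      exact pow_ne_zero _ u.ne_zero (hc.symm.trans (map_zero _))
    have hpow : u ^ (2 * (q - 1) * (q - 1)) = 1 := by
      ext
      rw [Units.val_pow_eq_pow_val, pow_mul, ← hc, ← map_pow, ← hK,
        FiniteField.pow_card_sub_one_eq_one c hc0, map_one, Units.val_one]
    exact Nat.eq_three_of_sq_sub_one_dvd (hK ▸ Fintype.one_lt_card)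
      (hu ▸ orderOf_dvd_of_pow_eq_one hpow)
  · rintro rfl
    have hsq : (u : L) ^ (2 * (3 - 1)) * (u : L) ^ (2 * (3 - 1)) = 1 := by
      rw [← pow_add, ← Units.val_pow_eq_pow_val,
        show 2 * (3 - 1) + 2 * (3 - 1) = 3 ^ 2 - 1 from rfl, ← hu,
        pow_orderOf_eq_one, Units.val_one]
    rcases mul_self_eq_one_iff.mp hsq with h | h
    exacts [⟨1, by rw [h, map_one]⟩, ⟨-1, by rw [h, map_neg, map_one]⟩]

theorem omega_two_minus_irreducible_iff_general
    {K L : Type*} [Field K] [Field L] [Algebra K L] [Fintype K] [Fintype L]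
    (q : ℕ)
    (hK : Fintype.card K = q) (hL : Fintype.card L = q ^ 2)
    (u : Lˣ) (hu : ∀ v : Lˣ, v ∈ Subgroup.zpowers u) :
    (∀ W : Submodule K L, (∀ v ∈ W, ((u : L) ^ (2 * (q - 1))) * v ∈ W) →
        W = ⊥ ∨ W = ⊤) ↔ q ≠ 3 := by
  have hrank : finrank K L = 2 := by
    have hcard := card_eq_pow_finrank (K := K) (V := L)
    rw [hK, hL] at hcard
    exact Nat.pow_right_injective (hK ▸ Fintype.one_lt_card) hcard.symm
  have hord : orderOf u = q ^ 2 - 1 := by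
    rw [orderOf_eq_card_of_forall_mem_zpowers hu, Nat.card_units, Nat.card_eq_fintype_card, hL]
  rw [forall_mul_invariant_eq_bot_or_eq_top_iff hrank,
    unit_pow_two_mul_sub_one_mem_range_algebraMap_iff hK hord]

/-- Lemma 6.1: the generator of `Ω₂⁻(q) ≅ C_{(q+1)/(2,q-1)}`, realized as multiplication
by `u^(2(q-1))` on `F_{q²}` viewed as a 2-dimensional `F_q`-vector space (where `u`
generates `F_{q²}ˣ`), acts irreducibly if and only if `q ≠ 3`. -/
theorem omega_two_minus_irreducible_iff
    {K L : Type*} [Field K] [Field L] [Algebra K L] [Fintype K] [Fintype L]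
    (q : ℕ) (hq : Odd q) (hq3 : 3 ≤ q)
    (hK : Fintype.card K = q) (hL : Fintype.card L = q ^ 2)
    (u : Lˣ) (hu : ∀ v : Lˣ, v ∈ Subgroup.zpowers u) :
    (∀ W : Submodule K L, (∀ v ∈ W, ((u : L) ^ (2 * (q - 1))) * v ∈ W) →
        W = ⊥ ∨ W = ⊤) ↔ q ≠ 3 :=
  omega_two_minus_irreducible_iff_general q hK hL u hu
end
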